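/- For all indices 1 ≤ i, j ≤ ℓ, the difference operators H_i(u) and F_j(v) satisfy the Yangian Cartan–lowering relation: (u − v)·(H_i(u)∘F_j(v) − F_j(v)∘H_i(u)) = (iħ/2)·d_i·a_{ij}·(H_i(u)∘(F_j(u) − F_j(v)) + (F_j(u) − F_j(v))∘H_i(u)), as an identity of ℂ(u,v)-linear endomorphisms of F. -/

import Mathlib

open MvPolynomial Complex Finset

/-!
`H_i(u)` is multiplication by a rational function `h`, and
`F_j(w) = Σ_k T_k / (w - γ_{j,k} - iħd_j) ∘ β_{j,k}` with coefficients `T_k` independent of `w`.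
Term by term the relation is then a partial-fraction identity, valid as soon as
`β_{j,k}(h) · (u - γ_{j,k} - iħd_j - κ) = h · (u - γ_{j,k} - iħd_j + κ)`, `κ = (iħ/2) d_i a_{ij}`.
The shift `β_{j,k}` only moves the factors of `h` that contain `γ_{j,k}`: for `i = j` the
denominator factor `(u - γ_{i,k})(u - γ_{i,k} - iħd_i)`, for `i ≠ j` the `-a_{ji}` numerator
factors with `p = k`, whose quotient telescopes; `d_i a_{ij} = d_j a_{ji}` matches the two ends.
-/

noncomputable section

/-- Variables: the spectral variables (indexed by `Fin 2`) and the `γ_{i,k}`. -/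
abbrev Var (ℓ : ℕ) (m : Fin ℓ → ℕ) := Fin 2 ⊕ ((i : Fin ℓ) × Fin (m i))

/-- The field of rational functions over `ℂ` in the spectral variables and the `γ_{i,k}`. -/
abbrev FF (ℓ : ℕ) (m : Fin ℓ → ℕ) := FractionRing (MvPolynomial (Var ℓ m) ℂ)

variable (ℓ : ℕ) (m : Fin ℓ → ℕ)

/-- The embedding of constants `ℂ → F`. -/
def cstHom : ℂ →+* FF ℓ m :=
  (algebraMap (MvPolynomial (Var ℓ m) ℂ) (FF ℓ m)).comp (C : ℂ →+* MvPolynomial (Var ℓ m) ℂ)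

def cst (c : ℂ) : FF ℓ m := cstHom ℓ m c

/-- The variable `γ_{i,k}` as an element of `F`. -/
def gam (i : Fin ℓ) (k : Fin (m i)) : FF ℓ m :=
  algebraMap (MvPolynomial (Var ℓ m) ℂ) (FF ℓ m) (X (Sum.inr ⟨i, k⟩))

/-- The spectral variables. -/
def spec (t : Fin 2) : FF ℓ m :=
  algebraMap (MvPolynomial (Var ℓ m) ℂ) (FF ℓ m) (X (Sum.inl t))

/-- The algebra automorphism of the polynomial ring shifting the variable `w` by `c`
and fixing all other variables. -/
def shiftPoly (c : ℂ) (w : Var ℓ m) :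
    MvPolynomial (Var ℓ m) ℂ ≃ₐ[ℂ] MvPolynomial (Var ℓ m) ℂ :=
  AlgEquiv.ofAlgHom
    (aeval (fun j => if j = w then X j + MvPolynomial.C c else X j))
    (aeval (fun j => if j = w then X j - MvPolynomial.C c else X j))
    (by apply MvPolynomial.algHom_ext; intro j; by_cases h : j = w <;> simp [h])
    (by apply MvPolynomial.algHom_ext; intro j; by_cases h : j = w <;> simp [h])

/-- The induced automorphism of the field of rational functions. -/
def shiftField (c : ℂ) (w : Var ℓ m) : FF ℓ m ≃+* FF ℓ m :=
  IsFractionRing.ringEquivOfRingEquiv (shiftPoly ℓ m c w).toRingEquiv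

variable (a : Fin ℓ → Fin ℓ → ℤ) (d : Fin ℓ → ℕ) (hb : ℂ)

/-- `β_{i,k}` : the automorphism `γ_{i,k} ↦ γ_{i,k} + iħ·d_i`. -/
def beta (i : Fin ℓ) (k : Fin (m i)) : FF ℓ m ≃+* FF ℓ m :=
  shiftField ℓ m (I * hb * (d i : ℂ)) (Sum.inr ⟨i, k⟩)

/-- The constant `(iħ/2)·(d_i·a_{ij} + 2r·d_j)`, where `r` is offset by one
(so that `r` ranges over `0, …, −a_{ji} − 1` in `Finset.range`). -/
def cf (i j : Fin ℓ) (r : ℕ) : ℂ :=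
  (I * hb / 2) * ((d i : ℂ) * (a i j : ℂ) + 2 * ((r : ℂ) + 1) * (d j : ℂ))

variable (l : Fin ℓ → ℕ) (ν : (i : Fin ℓ) → Fin (l i) → ℂ)

/-- `R_i(x) = Π_{t=1}^{l_i} (x − ν_{i,t})`, evaluated at `x ∈ F`. -/
def Rv (i : Fin ℓ) (x : FF ℓ m) : FF ℓ m :=
  ∏ t : Fin (l i), (x - cst ℓ m (ν i t))

/-- The operator `H_i(w)` (acting by multiplication). -/
def Hop (i : Fin ℓ) (w : FF ℓ m) : FF ℓ m → FF ℓ m := fun f =>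
  (Rv ℓ m l ν i w *
    (∏ j ∈ univ.erase i, ∏ r ∈ range (-(a j i)).toNat, ∏ p : Fin (m j),
      (w - gam ℓ m j p - cst ℓ m (cf ℓ a d hb i j r))) /
    (∏ p : Fin (m i),
      ((w - gam ℓ m i p) * (w - gam ℓ m i p - cst ℓ m (I * hb * (d i : ℂ)))))) * f

/-- The operator `F_i(w)`. -/
def Fop (i : Fin ℓ) (w : FF ℓ m) : FF ℓ m → FF ℓ m := fun f =>
  cst ℓ m (-((d i : ℂ) ^ (-(1/2 : ℂ)))) *
    ∑ k : Fin (m i),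
      (Rv ℓ m l ν i (gam ℓ m i k + cst ℓ m (I * hb * (d i : ℂ))) *
        (∏ j ∈ univ.filter (fun j => j < i), ∏ r ∈ range (-(a j i)).toNat, ∏ p : Fin (m j),
          (gam ℓ m i k - gam ℓ m j p - cst ℓ m (cf ℓ a d hb i j r)
            + cst ℓ m (I * hb * (d i : ℂ)))) /
        ((w - gam ℓ m i k - cst ℓ m (I * hb * (d i : ℂ))) *
          ∏ p ∈ univ.erase k, (gam ℓ m i k - gam ℓ m i p))) *
      (beta ℓ m d hb i k) f

theorem Finset.map_prod_eq_map_mul_prod_erase {ι M F : Type*} [CommMonoid M] [DecidableEq ι]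
    [FunLike F M M] [MonoidHomClass F M M] (σ : F) {s : Finset ι} {k : ι} (hk : k ∈ s)
    (x : ι → M) (hfix : ∀ p ∈ s, p ≠ k → σ (x p) = x p) :
    σ (∏ p ∈ s, x p) = σ (x k) * ∏ p ∈ s.erase k, x p := by
  rw [← mul_prod_erase s x hk, map_mul, map_prod]
  congr 1
  exact prod_congr rfl fun p hp => hfix p (mem_of_mem_erase hp) (ne_of_mem_erase hp)

theorem sub_mul_commutator_div {K : Type*} [Field K] {u v X κ h h' : K} (T b : K)
    (hu : u - X ≠ 0) (hv : v - X ≠ 0) (hh : h' * (u - X - κ) = h * (u - X + κ)) :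
    (u - v) * (h * (T / (v - X) * b) - T / (v - X) * (h' * b)) =
      κ * (h * (T / (u - X) * b - T / (v - X) * b) +
        (T / (u - X) * (h' * b) - T / (v - X) * (h' * b))) := by
  field_simp
  linear_combination -(u - v) * T * b * hh

theorem sub_mul_commutator_sum_div {K ι F : Type*} [Field K] [FunLike F K K] [RingHomClass F K K]
    (s : Finset ι) (σ : ι → F) (T X : ι → K) {u v κ h : K} (f : K)
    (hu : ∀ k ∈ s, u - X k ≠ 0) (hv : ∀ k ∈ s, v - X k ≠ 0)
    (hh : ∀ k ∈ s, σ k h * (u - X k - κ) = h * (u - X k + κ)) :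
    (u - v) * (h * ∑ k ∈ s, T k / (v - X k) * σ k f - ∑ k ∈ s, T k / (v - X k) * σ k (h * f)) =
      κ * (h * (∑ k ∈ s, T k / (u - X k) * σ k f - ∑ k ∈ s, T k / (v - X k) * σ k f) +
        (∑ k ∈ s, T k / (u - X k) * σ k (h * f) - ∑ k ∈ s, T k / (v - X k) * σ k (h * f))) := by
  simp only [mul_sum, ← sum_sub_distrib, ← sum_add_distrib, map_mul]
  exact sum_congr rfl fun k hk =>
    sub_mul_commutator_div (T k) (σ k f) (hu k hk) (hv k hk) (hh k hk)

variable {ℓ m}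

theorem cst_add (c c' : ℂ) : cst ℓ m (c + c') = cst ℓ m c + cst ℓ m c' :=
  map_add (cstHom ℓ m) c c'

theorem cst_sub (c c' : ℂ) : cst ℓ m (c - c') = cst ℓ m c - cst ℓ m c' :=
  map_sub (cstHom ℓ m) c c'

theorem spec_sub_gam_sub_cst_ne_zero (t : Fin 2) (j : Fin ℓ) (p : Fin (m j)) (c : ℂ) :
    spec ℓ m t - gam ℓ m j p - cst ℓ m c ≠ 0 := by
  have hpoly : X (Sum.inl t) - X (Sum.inr ⟨j, p⟩) - MvPolynomial.C c ≠
      (0 : MvPolynomial (Var ℓ m) ℂ) := fun h0 => by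
    simpa using congrArg (eval fun q => if q = Sum.inl t then c + 1 else 0) h0
  have := (IsFractionRing.injective (MvPolynomial (Var ℓ m) ℂ) (FF ℓ m)).ne hpoly
  simpa [spec, gam, cst, cstHom] using this

theorem spec_sub_gam_ne_zero (t : Fin 2) (j : Fin ℓ) (p : Fin (m j)) :
    spec ℓ m t - gam ℓ m j p ≠ 0 := by
  simpa [cst] using spec_sub_gam_sub_cst_ne_zero t j p 0

theorem beta_algebraMap (i : Fin ℓ) (k : Fin (m i)) (q : MvPolynomial (Var ℓ m) ℂ) :
    beta ℓ m d hb i k (algebraMap _ (FF ℓ m) q) =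
      algebraMap _ (FF ℓ m) (shiftPoly ℓ m (I * hb * (d i : ℂ)) (Sum.inr ⟨i, k⟩) q) :=
  IsFractionRing.ringEquivOfRingEquiv_algebraMap _ q

theorem beta_cst (i : Fin ℓ) (k : Fin (m i)) (c : ℂ) :
    beta ℓ m d hb i k (cst ℓ m c) = cst ℓ m c := by
  simp [cst, cstHom, beta_algebraMap, shiftPoly]

theorem beta_spec (i : Fin ℓ) (k : Fin (m i)) (t : Fin 2) :
    beta ℓ m d hb i k (spec ℓ m t) = spec ℓ m t := by
  simp [spec, beta_algebraMap, shiftPoly]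

theorem beta_gam_self (i : Fin ℓ) (k : Fin (m i)) :
    beta ℓ m d hb i k (gam ℓ m i k) = gam ℓ m i k + cst ℓ m (I * hb * (d i : ℂ)) := by
  simp [gam, cst, cstHom, beta_algebraMap, shiftPoly]

theorem beta_gam_of_ne {i j : Fin ℓ} (k : Fin (m i)) (p : Fin (m j))
    (h : (⟨j, p⟩ : Σ i', Fin (m i')) ≠ ⟨i, k⟩) :
    beta ℓ m d hb i k (gam ℓ m j p) = gam ℓ m j p := by
  simp [gam, beta_algebraMap, shiftPoly, h]

theorem cf_zero (i j : Fin ℓ) :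
    cf ℓ a d hb i j 0 = I * hb * (d j : ℂ) + I * hb / 2 * ((d i : ℂ) * (a i j : ℂ)) := by
  simp only [cf]; push_cast; ring

theorem cf_succ (i j : Fin ℓ) (r : ℕ) :
    cf ℓ a d hb i j (r + 1) = I * hb * (d j : ℂ) + cf ℓ a d hb i j r := by
  simp only [cf]; push_cast; ring

theorem cf_toNat_neg {i j : Fin ℓ} (hji : a j i ≤ 0) (hsym : (d i : ℤ) * a i j = d j * a j i) :
    cf ℓ a d hb i j (-(a j i)).toNat =
      I * hb * (d j : ℂ) - I * hb / 2 * ((d i : ℂ) * (a i j : ℂ)) := by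
  have hn : (((-(a j i)).toNat : ℕ) : ℂ) = -(a j i : ℂ) := by
    exact_mod_cast Int.toNat_of_nonneg (neg_nonneg.mpr hji)
  have hs : (d i : ℂ) * (a i j : ℂ) = (d j : ℂ) * (a j i : ℂ) := by exact_mod_cast hsym
  simp only [cf, hn]
  linear_combination I * hb * hs

def hopNum (i : Fin ℓ) (w : FF ℓ m) : FF ℓ m :=
  ∏ j ∈ univ.erase i, ∏ r ∈ range (-(a j i)).toNat, ∏ p : Fin (m j),
    (w - gam ℓ m j p - cst ℓ m (cf ℓ a d hb i j r))

def hopDen (i : Fin ℓ) (w : FF ℓ m) : FF ℓ m :=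
  ∏ p : Fin (m i), ((w - gam ℓ m i p) * (w - gam ℓ m i p - cst ℓ m (I * hb * (d i : ℂ))))

def hopFactor (i : Fin ℓ) (w : FF ℓ m) : FF ℓ m :=
  Rv ℓ m l ν i w * hopNum a d hb i w / hopDen d hb i w

theorem Hop_apply (i : Fin ℓ) (w f : FF ℓ m) :
    Hop ℓ m a d hb l ν i w f = hopFactor a d hb l ν i w * f :=
  rfl

theorem exists_Fop_eq_sum (j : Fin ℓ) :
    ∃ T : Fin (m j) → FF ℓ m, ∀ w f, Fop ℓ m a d hb l ν j w f =
      ∑ k, T k / (w - (gam ℓ m j k + cst ℓ m (I * hb * (d j : ℂ)))) * beta ℓ m d hb j k f := by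
  refine ⟨fun k => cst ℓ m (-((d j : ℂ) ^ (-(1/2 : ℂ)))) *
    (Rv ℓ m l ν j (gam ℓ m j k + cst ℓ m (I * hb * (d j : ℂ))) *
      ∏ j' ∈ univ.filter (fun j' => j' < j), ∏ r ∈ range (-(a j' j)).toNat, ∏ p : Fin (m j'),
        (gam ℓ m j k - gam ℓ m j' p - cst ℓ m (cf ℓ a d hb j j' r)
          + cst ℓ m (I * hb * (d j : ℂ)))) /
    ∏ p ∈ univ.erase k, (gam ℓ m j k - gam ℓ m j p), fun w f => ?_⟩
  rw [Fop, mul_sum]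
  refine sum_congr rfl fun k _ => ?_
  rw [div_mul_eq_div_div_swap, sub_sub w]
  ring

theorem beta_Rv_spec (i j : Fin ℓ) (k : Fin (m j)) (t : Fin 2) :
    beta ℓ m d hb j k (Rv ℓ m l ν i (spec ℓ m t)) = Rv ℓ m l ν i (spec ℓ m t) := by
  simp only [Rv, map_prod, map_sub, beta_spec, beta_cst]

theorem beta_spec_sub_gam_sub_cst_of_ne {i j : Fin ℓ} (k : Fin (m i)) (p : Fin (m j))
    (h : (⟨j, p⟩ : Σ i', Fin (m i')) ≠ ⟨i, k⟩) (t : Fin 2) (c : ℂ) :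
    beta ℓ m d hb i k (spec ℓ m t - gam ℓ m j p - cst ℓ m c) =
      spec ℓ m t - gam ℓ m j p - cst ℓ m c := by
  rw [map_sub, map_sub, beta_spec, beta_cst, beta_gam_of_ne d hb k p h]

theorem beta_spec_sub_gam_sub_cst_self (i : Fin ℓ) (k : Fin (m i)) (t : Fin 2) (c : ℂ) :
    beta ℓ m d hb i k (spec ℓ m t - gam ℓ m i k - cst ℓ m c) =
      spec ℓ m t - gam ℓ m i k - cst ℓ m (I * hb * (d i : ℂ) + c) := by
  rw [map_sub, map_sub, beta_spec, beta_cst, beta_gam_self, cst_add]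
  ring

theorem beta_prod_range_prod_mul (i j : Fin ℓ) (k : Fin (m j)) (t : Fin 2) (n : ℕ) :
    beta ℓ m d hb j k (∏ r ∈ range n, ∏ p : Fin (m j),
        (spec ℓ m t - gam ℓ m j p - cst ℓ m (cf ℓ a d hb i j r))) *
        (spec ℓ m t - gam ℓ m j k - cst ℓ m (cf ℓ a d hb i j 0)) =
      (∏ r ∈ range n, ∏ p : Fin (m j),
        (spec ℓ m t - gam ℓ m j p - cst ℓ m (cf ℓ a d hb i j r))) *
        (spec ℓ m t - gam ℓ m j k - cst ℓ m (cf ℓ a d hb i j n)) := by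
  set φ : ℕ → Fin (m j) → FF ℓ m := fun r p =>
    spec ℓ m t - gam ℓ m j p - cst ℓ m (cf ℓ a d hb i j r)
  have hβ : ∀ r, beta ℓ m d hb j k (∏ p, φ r p) = φ (r + 1) k * ∏ p ∈ univ.erase k, φ r p := by
    intro r
    rw [map_prod_eq_map_mul_prod_erase _ (mem_univ k) _ fun p _ hp =>
      beta_spec_sub_gam_sub_cst_of_ne d hb k p (by simpa using hp) t _]
    simp only [φ, beta_spec_sub_gam_sub_cst_self, cf_succ]
  have hsplit : ∀ r, ∏ p, φ r p = φ r k * ∏ p ∈ univ.erase k, φ r p := fun r =>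
    (mul_prod_erase _ _ (mem_univ k)).symm
  have htel : (∏ r ∈ range n, φ (r + 1) k) * φ 0 k = (∏ r ∈ range n, φ r k) * φ n k :=
    (prod_range_succ' (φ · k) n).symm.trans (prod_range_succ (φ · k) n)
  rw [map_prod, prod_congr rfl fun r _ => hβ r, prod_congr rfl fun r _ => hsplit r,
    prod_mul_distrib, prod_mul_distrib]
  linear_combination (∏ r ∈ range n, ∏ p ∈ univ.erase k, φ r p) * htel

theorem beta_hopNum_mul_of_ne {i j : Fin ℓ} (hij : i ≠ j) (hji : a j i ≤ 0)
    (hsym : (d i : ℤ) * a i j = d j * a j i) (k : Fin (m j)) (t : Fin 2) :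
    beta ℓ m d hb j k (hopNum a d hb i (spec ℓ m t)) *
        (spec ℓ m t - (gam ℓ m j k + cst ℓ m (I * hb * (d j : ℂ))) -
          cst ℓ m (I * hb / 2 * ((d i : ℂ) * (a i j : ℂ)))) =
      hopNum a d hb i (spec ℓ m t) *
        (spec ℓ m t - (gam ℓ m j k + cst ℓ m (I * hb * (d j : ℂ))) +
          cst ℓ m (I * hb / 2 * ((d i : ℂ) * (a i j : ℂ)))) := by
  have hj : j ∈ univ.erase i := mem_erase.mpr ⟨hij.symm, mem_univ j⟩
  have hblock := beta_prod_range_prod_mul a d hb i j k t (-(a j i)).toNat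
  rw [cf_zero, cf_toNat_neg a d hb hji hsym, cst_add, cst_sub] at hblock
  rw [hopNum, map_prod_eq_map_mul_prod_erase _ hj _ fun j' _ hj' => by
      simp [map_prod, beta_spec_sub_gam_sub_cst_of_ne, hj'],
    ← mul_prod_erase _ _ hj]
  linear_combination (∏ j' ∈ (univ.erase i).erase j, ∏ r ∈ range (-(a j' i)).toNat,
    ∏ p : Fin (m j'), (spec ℓ m t - gam ℓ m j' p - cst ℓ m (cf ℓ a d hb i j' r))) * hblock

theorem beta_hopNum_self (i : Fin ℓ) (k : Fin (m i)) (t : Fin 2) :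
    beta ℓ m d hb i k (hopNum a d hb i (spec ℓ m t)) = hopNum a d hb i (spec ℓ m t) := by
  rw [hopNum, map_prod]
  refine prod_congr rfl fun j' hj' => ?_
  simp [map_prod, beta_spec_sub_gam_sub_cst_of_ne, ne_of_mem_erase hj']

theorem beta_hopDen_of_ne {i j : Fin ℓ} (hij : i ≠ j) (k : Fin (m j)) (t : Fin 2) :
    beta ℓ m d hb j k (hopDen d hb i (spec ℓ m t)) = hopDen d hb i (spec ℓ m t) := by
  simp [hopDen, map_prod, beta_spec, beta_cst, beta_gam_of_ne, hij]

theorem beta_hopDen_self_mul (i : Fin ℓ) (k : Fin (m i)) (t : Fin 2) :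
    beta ℓ m d hb i k (hopDen d hb i (spec ℓ m t)) * (spec ℓ m t - gam ℓ m i k) =
      hopDen d hb i (spec ℓ m t) *
        (spec ℓ m t - (gam ℓ m i k + cst ℓ m (I * hb * (d i : ℂ))) -
          cst ℓ m (I * hb * (d i : ℂ))) := by
  rw [hopDen, map_prod_eq_map_mul_prod_erase _ (mem_univ k) _ fun p _ hp => by
      simp [beta_spec, beta_cst, beta_gam_of_ne, hp],
    ← mul_prod_erase univ _ (mem_univ k)]
  simp only [map_mul, map_sub, beta_spec, beta_cst, beta_gam_self]
  ring

theorem hopDen_spec_ne_zero (i : Fin ℓ) (t : Fin 2) : hopDen d hb i (spec ℓ m t) ≠ 0 :=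
  prod_ne_zero_iff.mpr fun p _ =>
    mul_ne_zero (spec_sub_gam_ne_zero t i p) (spec_sub_gam_sub_cst_ne_zero t i p _)

theorem beta_hopFactor_mul (ha : ∀ i, a i i = 2) (ha' : ∀ i j, i ≠ j → a i j ≤ 0)
    (hsym : ∀ i j, (d i : ℤ) * a i j = (d j : ℤ) * a j i) (i j : Fin ℓ) (k : Fin (m j))
    (t : Fin 2) :
    beta ℓ m d hb j k (hopFactor a d hb l ν i (spec ℓ m t)) *
        (spec ℓ m t - (gam ℓ m j k + cst ℓ m (I * hb * (d j : ℂ))) -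
          cst ℓ m (I * hb / 2 * ((d i : ℂ) * (a i j : ℂ)))) =
      hopFactor a d hb l ν i (spec ℓ m t) *
        (spec ℓ m t - (gam ℓ m j k + cst ℓ m (I * hb * (d j : ℂ))) +
          cst ℓ m (I * hb / 2 * ((d i : ℂ) * (a i j : ℂ)))) := by
  rw [hopFactor, map_div₀, map_mul, beta_Rv_spec]
  by_cases hij : i = j
  · subst hij
    have hκ : I * hb / 2 * ((d i : ℂ) * (a i i : ℂ)) = I * hb * (d i : ℂ) := by
      rw [ha i]; push_cast; ring
    have hD := hopDen_spec_ne_zero (m := m) d hb i t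
    have hβD : beta ℓ m d hb i k (hopDen d hb i (spec ℓ m t)) ≠ 0 := (map_ne_zero _).mpr hD
    rw [hκ, beta_hopNum_self, div_mul_eq_mul_div, div_mul_eq_mul_div, div_eq_div_iff hβD hD]
    linear_combination (-(Rv ℓ m l ν i (spec ℓ m t) * hopNum a d hb i (spec ℓ m t))) *
      beta_hopDen_self_mul d hb i k t
  · rw [beta_hopDen_of_ne d hb hij]
    linear_combination (Rv ℓ m l ν i (spec ℓ m t) / hopDen d hb i (spec ℓ m t)) *
      beta_hopNum_mul_of_ne a d hb hij (ha' j i (Ne.symm hij)) (hsym i j) k t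

theorem yangian_cartan_lowering_general
    (ℓ : ℕ)
    (a : Fin ℓ → Fin ℓ → ℤ) (ha : ∀ i, a i i = 2) (ha' : ∀ i j, i ≠ j → a i j ≤ 0)
    (d : Fin ℓ → ℕ)
    (hsym : ∀ i j, (d i : ℤ) * a i j = (d j : ℤ) * a j i)
    (hb : ℂ) (m : Fin ℓ → ℕ)
    (l : Fin ℓ → ℕ)
    (ν : (i : Fin ℓ) → Fin (l i) → ℂ)
    (i j : Fin ℓ) :
    (spec ℓ m 0 - spec ℓ m 1) •
        (Hop ℓ m a d hb l ν i (spec ℓ m 0) ∘ Fop ℓ m a d hb l ν j (spec ℓ m 1)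
          - Fop ℓ m a d hb l ν j (spec ℓ m 1) ∘ Hop ℓ m a d hb l ν i (spec ℓ m 0))
      = cst ℓ m ((I * hb / 2) * ((d i : ℂ) * (a i j : ℂ))) •
        (Hop ℓ m a d hb l ν i (spec ℓ m 0) ∘
            (Fop ℓ m a d hb l ν j (spec ℓ m 0) - Fop ℓ m a d hb l ν j (spec ℓ m 1))
          + (Fop ℓ m a d hb l ν j (spec ℓ m 0) - Fop ℓ m a d hb l ν j (spec ℓ m 1)) ∘
            Hop ℓ m a d hb l ν i (spec ℓ m 0)) := by
  obtain ⟨T, hT⟩ := exists_Fop_eq_sum (m := m) a d hb l ν j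
  funext f
  simp only [Pi.smul_apply, Pi.sub_apply, Pi.add_apply, Function.comp_apply, smul_eq_mul,
    Hop_apply, hT]
  refine sub_mul_commutator_sum_div univ (beta ℓ m d hb j) T _ f
    (fun k _ => ?_) (fun k _ => ?_) (fun k _ => beta_hopFactor_mul a d hb l ν ha ha' hsym i j k 0)
  all_goals rw [← sub_sub]; exact spec_sub_gam_sub_cst_ne_zero _ j k _

/-- the Yangian Cartan–lowering relation. -/
theorem yangian_cartan_lowering
    (ℓ : ℕ) (hl : 1 ≤ ℓ)
    (a : Fin ℓ → Fin ℓ → ℤ) (ha : ∀ i, a i i = 2) (ha' : ∀ i j, i ≠ j → a i j ≤ 0)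
    (d : Fin ℓ → ℕ) (hd : ∀ i, 0 < d i)
    (hsym : ∀ i j, (d i : ℤ) * a i j = (d j : ℤ) * a j i)
    (hb : ℂ) (m : Fin ℓ → ℕ) (hm : ∀ i, 0 < m i)
    (l : Fin ℓ → ℕ) (hln : ∀ i, (l i : ℤ) = ∑ j, (m j : ℤ) * a j i)
    (ν : (i : Fin ℓ) → Fin (l i) → ℂ)
    (i j : Fin ℓ) :
    (spec ℓ m 0 - spec ℓ m 1) •
        (Hop ℓ m a d hb l ν i (spec ℓ m 0) ∘ Fop ℓ m a d hb l ν j (spec ℓ m 1)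
          - Fop ℓ m a d hb l ν j (spec ℓ m 1) ∘ Hop ℓ m a d hb l ν i (spec ℓ m 0))
      = cst ℓ m ((I * hb / 2) * ((d i : ℂ) * (a i j : ℂ))) •
        (Hop ℓ m a d hb l ν i (spec ℓ m 0) ∘
            (Fop ℓ m a d hb l ν j (spec ℓ m 0) - Fop ℓ m a d hb l ν j (spec ℓ m 1))
          + (Fop ℓ m a d hb l ν j (spec ℓ m 0) - Fop ℓ m a d hb l ν j (spec ℓ m 1)) ∘
            Hop ℓ m a d hb l ν i (spec ℓ m 0)) :=
  yangian_cartan_lowering_general ℓ a ha ha' d hsym hb m l ν i j
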